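/- Let M' and M be finitely generated free abelian groups, f : M' → M a surjective group homomorphism, φ' : M' → M' a group automorphism of finite order (φ'^k = id for some k ≥ 1), and φ : M → M a group homomorphism satisfying f ∘ φ' = φ ∘ f. Let k be a field. Then the monoid algebra k[Fix(φ)] (the AddMonoidAlgebra of the fixed-point subgroup Fix(φ) ⊆ M over k) is a finitely generated module over the image of the k-algebra homomorphism k[Fix(φ')] → k[Fix(φ)] induced by the restriction of f to fixed points. -/

import Mathlib

/-- The fixed-point subgroup `{a : A | ψ a = a}` of an endomorphism `ψ` of an abelian
group `A`. -/
def fixedSubgroup {A : Type*} [AddCommGroup A] (ψ : A →+ A) : AddSubgroup A where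
  carrier := {a | ψ a = a}
  zero_mem' := by simp
  add_mem' := by
    intro a b ha hb
    simp only [Set.mem_setOf_eq, map_add] at *
    rw [ha, hb]
  neg_mem' := by
    intro a ha
    simp only [Set.mem_setOf_eq, map_neg] at *
    rw [ha]

/-!
If `x ∈ M'` lies over a fixed point `b` of `φ`, the orbit sum `∑_{i<n} φ'^[i] x` is fixed by `φ'`
and lies over `n • b`. Hence the image of `Fix(φ')` contains `n • Fix(φ)` and so has finite index
in the finitely generated group `Fix(φ)`; finitely many coset representatives then generate
`k[Fix(φ)]` over the image of `k[Fix(φ')]`.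
-/

open AddMonoidAlgebra Finset

theorem AddSubgroup.addGroupFG_of_moduleFinite_int {A : Type*} [AddCommGroup A]
    [Module.Finite ℤ A] (H : AddSubgroup A) : AddGroup.FG H :=
  have : Module.Finite ℤ H := .of_injective H.subtype.toIntLinearMap Subtype.val_injective
  Module.Finite.iff_addGroup_fg.mp this

namespace AddMonoidAlgebra

variable {k G' G : Type*} [CommSemiring k] [AddCommGroup G'] [AddCommGroup G]

theorem single_mem_range_mapDomainAlgHom {r : G' →+ G} {g : G} (hg : g ∈ r.range) (b : k) :
    single g b ∈ (mapDomainAlgHom k k r).range := by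
  obtain ⟨g', rfl⟩ := hg
  exact ⟨single g' b, by simp [mapDomainAlgHom_apply, mapDomain_single]⟩

theorem finite_range_mapDomainAlgHom_of_finiteIndex (r : G' →+ G) [r.range.FiniteIndex] :
    Module.Finite (mapDomainAlgHom k k r).range (AddMonoidAlgebra k G) := by
  let rep : G ⧸ r.range → AddMonoidAlgebra k G := fun q => single q.out 1
  refine ⟨(Set.finite_range rep).toFinset, ?_⟩
  rw [Set.Finite.coe_toFinset, eq_top_iff]
  rintro x -
  induction x using AddMonoidAlgebra.induction_linear with
  | zero => exact zero_mem _
  | add x y hx hy => exact add_mem hx hy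
  | single g b =>
    let q : G ⧸ r.range := g
    have hmem : g - q.out ∈ r.range := by
      rw [← QuotientAddGroup.eq_iff_sub_mem]; exact q.out_eq.symm
    have hsplit : single g b = single (g - q.out) b * rep q := by
      rw [single_mul_single, mul_one, sub_add_cancel]
    let u : (mapDomainAlgHom k k r).range := ⟨_, single_mem_range_mapDomainAlgHom hmem b⟩
    rw [hsplit, show single (g - q.out) b * rep q = u • rep q from rfl]
    exact Submodule.smul_mem _ u (Submodule.subset_span ⟨q, rfl⟩)

end AddMonoidAlgebra

section FixedPoints

variable {A B : Type*} [AddCommGroup A] [AddCommGroup B]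

theorem sum_range_iterate_mem_fixedSubgroup {ψ : A →+ A} {n : ℕ} (hn : ∀ x, ψ^[n] x = x)
    (x : A) : ∑ i ∈ range n, ψ^[i] x ∈ fixedSubgroup ψ := by
  show ψ (∑ i ∈ range n, ψ^[i] x) = ∑ i ∈ range n, ψ^[i] x
  have := sum_range_succ' (fun i => ψ^[i] x) n
  rw [sum_range_succ, hn, Function.iterate_zero_apply] at this
  simpa only [map_sum, ← Function.iterate_succ_apply' ψ] using (add_right_cancel this).symm

theorem exists_mem_fixedSubgroup_map_eq_nsmul {f : A →+ B} (hf : Function.Surjective f) {φ' : A →+ A}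
    {φ : B →+ B} (hcomm : ∀ x, f (φ' x) = φ (f x)) {n : ℕ} (hn : ∀ x, φ'^[n] x = x)
    {b : B} (hb : b ∈ fixedSubgroup φ) :
    ∃ a ∈ fixedSubgroup φ', f a = n • b := by
  obtain ⟨x, rfl⟩ := hf b
  have horbit : ∀ i, f (φ'^[i] x) = f x := fun i => by
    induction i with
    | zero => rfl
    | succ i ih => rw [Function.iterate_succ_apply', hcomm, ih]; exact hb
  exact ⟨_, sum_range_iterate_mem_fixedSubgroup hn x, by simp [horbit]⟩

end FixedPoints

theorem groupAlgebra_fixedPoints_finite_general {M' M : Type*} [AddCommGroup M'] [AddCommGroup M]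
    [Module.Finite ℤ M]
    (f : M' →+ M) (hf : Function.Surjective f)
    (φ' : M' →+ M')
    (n : ℕ) (hn : 1 ≤ n) (hord : ∀ x : M', (⇑φ')^[n] x = x)
    (φ : M →+ M) (hcomm : ∀ x : M', f (φ' x) = φ (f x))
    (k : Type*) [Field k]
    (r : fixedSubgroup φ' →+ fixedSubgroup φ) (hr : ∀ x : fixedSubgroup φ', (r x : M) = f x) :
    Module.Finite
      (AddMonoidAlgebra.mapDomainAlgHom k k r).range
      (AddMonoidAlgebra k (fixedSubgroup φ)) := by
  have : AddGroup.FG (fixedSubgroup φ) := (fixedSubgroup φ).addGroupFG_of_moduleFinite_int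
  have hle : (nsmulAddMonoidHom n).range ≤ r.range := by
    rintro _ ⟨b, rfl⟩
    obtain ⟨a, ha, hfa⟩ := exists_mem_fixedSubgroup_map_eq_nsmul hf hcomm hord b.2
    exact ⟨⟨a, ha⟩, Subtype.ext (by simp [hr, hfa])⟩
  have := AddSubgroup.finiteIndex_range_nsmulAddMonoidHom_of_fg (fixedSubgroup φ) (n := n)
    (by omega)
  have := AddSubgroup.finiteIndex_of_le hle
  exact finite_range_mapDomainAlgHom_of_finiteIndex r

/-- Let `M'`, `M` be finitely generated free abelian groups, `f : M' → M` a surjective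
homomorphism, `φ'` an automorphism of `M'` of finite order, and `φ : M → M` a homomorphism
with `f ∘ φ' = φ ∘ f`.  Let `k` be a field, and let `r : Fix(φ') → Fix(φ)` be the
restriction of `f` to fixed points.  Then the group algebra `k[Fix(φ)]` is a finitely
generated module over the image of the induced `k`-algebra map
`k[Fix(φ')] → k[Fix(φ)]`. -/
theorem groupAlgebra_fixedPoints_finite {M' M : Type*} [AddCommGroup M'] [AddCommGroup M]
    [Module.Free ℤ M'] [Module.Finite ℤ M'] [Module.Free ℤ M] [Module.Finite ℤ M]
    (f : M' →+ M) (hf : Function.Surjective f)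
    (φ' : M' →+ M') (hbij : Function.Bijective φ')
    (n : ℕ) (hn : 1 ≤ n) (hord : ∀ x : M', (⇑φ')^[n] x = x)
    (φ : M →+ M) (hcomm : ∀ x : M', f (φ' x) = φ (f x))
    (k : Type*) [Field k]
    (r : fixedSubgroup φ' →+ fixedSubgroup φ) (hr : ∀ x : fixedSubgroup φ', (r x : M) = f x) :
    Module.Finite
      (AddMonoidAlgebra.mapDomainAlgHom k k r).range
      (AddMonoidAlgebra k (fixedSubgroup φ)) :=
  groupAlgebra_fixedPoints_finite_general f hf φ' n hn hord φ hcomm k r hr
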